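/- (Theorem 4.) Assume in addition that h is bounded above by a constant M ≥ 0. Then for all n ∈ ℕ ≥ 1, sup_{y ∈ ℝ^d} |q_{n+1}(y) − q_n(y)| ≤ c · sup_{y ∈ ℝ^d} |q_n(y) − q_{n-1}(y)|, where q_n = D^n(max(g, 0)). (All suprema are finite since 0 ≤ q_n ≤ h ≤ M pointwise.) -/

import Mathlib

open Finset

/-- The weighted arithmetic average operator:
`(A f)(y) = ∑ k, α k * f (y - x k)`. -/
noncomputable def avgOp (d m : ℕ) (α : Fin m → ℝ) (x : Fin m → (Fin d → ℝ))
    (f : (Fin d → ℝ) → ℝ) : (Fin d → ℝ) → ℝ :=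
  fun y => ∑ k, α k * f (y - x k)

/-- The Bermudan iteration operator: `(D f)(y) = max (c * (A f)(y)) (g y)`. -/
noncomputable def bermOp (d m : ℕ) (α : Fin m → ℝ) (x : Fin m → (Fin d → ℝ))
    (c : ℝ) (g : (Fin d → ℝ) → ℝ) (f : (Fin d → ℝ) → ℝ) : (Fin d → ℝ) → ℝ :=
  fun y => max (c * avgOp d m α x f y) (g y)

/-!
`A` is a positive averaging operator, so `|A f - A f'| ≤ sup |f - f'|`, and
`u ↦ max (c * u) (g y)` is `c`-Lipschitz; hence `D` contracts sup-distances by `c`.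
The suprema are genuine (not junk values) because `D` maps the order interval `[0, h]` into
itself, so every `q n` lies between `0` and `h ≤ M`.
-/

section

variable {d m : ℕ} {α : Fin m → ℝ} {x : Fin m → (Fin d → ℝ)}

theorem avgOp_mono (hα : ∀ k, 0 ≤ α k) {f f' : (Fin d → ℝ) → ℝ} (hf : f ≤ f') :
    avgOp d m α x f ≤ avgOp d m α x f' := fun y =>
  sum_le_sum fun k _ => mul_le_mul_of_nonneg_left (hf (y - x k)) (hα k)

theorem avgOp_nonneg (hα : ∀ k, 0 ≤ α k) {f : (Fin d → ℝ) → ℝ} (hf : 0 ≤ f) :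
    0 ≤ avgOp d m α x f := fun y =>
  sum_nonneg fun k _ => mul_nonneg (hα k) (hf (y - x k))

theorem abs_avgOp_sub_le (hα : ∀ k, 0 ≤ α k) (hsum : ∑ k, α k = 1)
    {f f' : (Fin d → ℝ) → ℝ} {S : ℝ} (hS : ∀ y, |f y - f' y| ≤ S) (y : Fin d → ℝ) :
    |avgOp d m α x f y - avgOp d m α x f' y| ≤ S :=
  calc |avgOp d m α x f y - avgOp d m α x f' y|
      = |∑ k, α k * (f (y - x k) - f' (y - x k))| := by
        simp only [avgOp, mul_sub, sum_sub_distrib]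
    _ ≤ ∑ k, |α k * (f (y - x k) - f' (y - x k))| := abs_sum_le_sum_abs _ _
    _ = ∑ k, α k * |f (y - x k) - f' (y - x k)| := by
        simp only [abs_mul, abs_of_nonneg (hα _)]
    _ ≤ ∑ k, α k * S := sum_le_sum fun k _ => mul_le_mul_of_nonneg_left (hS _) (hα k)
    _ = S := by rw [← sum_mul, hsum, one_mul]

theorem abs_bermOp_sub_le {c : ℝ} (hc : 0 ≤ c) (hα : ∀ k, 0 ≤ α k) (hsum : ∑ k, α k = 1)
    (g : (Fin d → ℝ) → ℝ) {f f' : (Fin d → ℝ) → ℝ} {S : ℝ} (hS : ∀ y, |f y - f' y| ≤ S)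
    (y : Fin d → ℝ) :
    |bermOp d m α x c g f y - bermOp d m α x c g f' y| ≤ c * S :=
  calc |bermOp d m α x c g f y - bermOp d m α x c g f' y|
      ≤ |c * avgOp d m α x f y - c * avgOp d m α x f' y| := abs_max_sub_max_le_abs _ _ _
    _ = c * |avgOp d m α x f y - avgOp d m α x f' y| := by
        rw [← mul_sub, abs_mul, abs_of_nonneg hc]
    _ ≤ c * S := mul_le_mul_of_nonneg_left (abs_avgOp_sub_le hα hsum hS y) hc

theorem bermOp_mapsTo_Icc {c : ℝ} (hc₀ : 0 ≤ c) (hc₁ : c ≤ 1) (hα : ∀ k, 0 ≤ α k)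
    {g h : (Fin d → ℝ) → ℝ} (hh : avgOp d m α x h ≤ h) (hgh : ∀ y, max 0 (g y) ≤ h y) :
    Set.MapsTo (bermOp d m α x c g) (Set.Icc 0 h) (Set.Icc 0 h) := by
  rintro f ⟨hf₀, hfh⟩
  have hh₀ : 0 ≤ h := fun y => (le_max_left _ _).trans (hgh y)
  refine ⟨fun y => le_max_of_le_left ?_, fun y => max_le ?_ ((le_max_right _ _).trans (hgh y))⟩
  · exact mul_nonneg hc₀ (avgOp_nonneg hα hf₀ y)
  · calc c * avgOp d m α x f y ≤ c * h y :=
          mul_le_mul_of_nonneg_left ((avgOp_mono hα hfh y).trans (hh y)) hc₀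
      _ ≤ h y := mul_le_of_le_one_left (hh₀ y) hc₁

end

theorem bddAbove_range_abs_sub {ι : Type*} {u v : ι → ℝ} {M : ℝ}
    (hu : ∀ i, u i ∈ Set.Icc 0 M) (hv : ∀ i, v i ∈ Set.Icc 0 M) :
    BddAbove (Set.range fun i => |u i - v i|) :=
  ⟨M, Set.forall_mem_range.2 fun i =>
    abs_sub_le_of_nonneg_of_le (hu i).1 (hu i).2 (hv i).1 (hv i).2⟩

theorem q_diff_contraction_general (d m : ℕ)
    (α : Fin m → ℝ) (hα : ∀ k, α k ∈ Set.Icc (0:ℝ) 1) (hsum : ∑ k, α k = 1)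
    (x : Fin m → (Fin d → ℝ))
    (c : ℝ) (hc : c ∈ Set.Ioo (0:ℝ) 1)
    (g h : (Fin d → ℝ) → ℝ)
    (hh : ∀ y, avgOp d m α x h y = h y)
    (hgh : ∀ y, max 0 (g y) ≤ h y)
    (M : ℝ) (hhM : ∀ y, h y ≤ M)
    (q : ℕ → (Fin d → ℝ) → ℝ)
    (hq : ∀ n, q n = (bermOp d m α x c g)^[n] (fun y => max (g y) 0)) :
    ∀ n : ℕ, 1 ≤ n →
      (⨆ y, |q (n + 1) y - q n y|) ≤ c * ⨆ y, |q n y - q (n - 1) y| := by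
  have hα₀ : ∀ k, 0 ≤ α k := fun k => (hα k).1
  have hq_succ : ∀ n, q (n + 1) = bermOp d m α x c g (q n) := fun n => by
    rw [hq, hq, Function.iterate_succ_apply']
  have hq_Icc : ∀ n, q n ∈ Set.Icc 0 h := fun n => by
    rw [hq]
    exact (bermOp_mapsTo_Icc hc.1.le hc.2.le hα₀ (fun y => (hh y).le) hgh).iterate n
      ⟨fun y => le_max_right _ _, fun y => (max_comm (g y) 0).trans_le (hgh y)⟩
  have hq_bound : ∀ n y, q n y ∈ Set.Icc 0 M := fun n y =>
    ⟨(hq_Icc n).1 y, ((hq_Icc n).2 y).trans (hhM y)⟩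
  rintro (_ | n) hn
  · omega
  have hbdd := bddAbove_range_abs_sub (hq_bound (n + 1)) (hq_bound n)
  rw [Nat.add_sub_cancel]
  refine ciSup_le fun y => ?_
  have hstep := abs_bermOp_sub_le (x := x) hc.1.le hα₀ hsum g (le_ciSup hbdd) y
  rwa [← hq_succ, ← hq_succ] at hstep

/-- Theorem 4: the successive differences contract with factor `c`:
`‖q_{n+1} - q_n‖_∞ ≤ c * ‖q_n - q_{n-1}‖_∞` for `n ≥ 1`. -/
theorem q_diff_contraction (d m : ℕ) (hm : 1 ≤ m)
    (α : Fin m → ℝ) (hα : ∀ k, α k ∈ Set.Icc (0:ℝ) 1) (hsum : ∑ k, α k = 1)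
    (x : Fin m → (Fin d → ℝ))
    (c : ℝ) (hc : c ∈ Set.Ioo (0:ℝ) 1)
    (g h : (Fin d → ℝ) → ℝ)
    (hg : ∀ y, g y ≤ avgOp d m α x g y)
    (hh : ∀ y, avgOp d m α x h y = h y)
    (hgh : ∀ y, max 0 (g y) ≤ h y)
    (M : ℝ) (hM : 0 ≤ M) (hhM : ∀ y, h y ≤ M)
    (q : ℕ → (Fin d → ℝ) → ℝ)
    (hq : ∀ n, q n = (bermOp d m α x c g)^[n] (fun y => max (g y) 0)) :
    ∀ n : ℕ, 1 ≤ n →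
      (⨆ y, |q (n + 1) y - q n y|) ≤ c * ⨆ y, |q n y - q (n - 1) y| :=
  q_diff_contraction_general d m α hα hsum x c hc g h hh hgh M hhM q hq
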